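/- arXiv:1108.5957 — 3 statements merged into one kernel-verified Lean document; each statement's English description precedes it below -/
import Mathlib

section
/- Let Ψ : A ⊗[k] B → B ⊗[k] A be any k-linear map (not assumed to be a weak distributive law). Then the weak unitality condition — (μ_B ⊗ id_A)(b ⊗ Ψ(a ⊗ 1_B)) = (id_B ⊗ μ_A)(Ψ(1_A ⊗ b) ⊗ a) for all a ∈ A, b ∈ B — holds if and only if both of the following hold: (i) Ψ(1_A ⊗ b) = (μ_B ⊗ id_A)(b ⊗ Ψ(1_A ⊗ 1_B)) for all b ∈ B, and (ii) Ψ(a ⊗ 1_B) = (id_B ⊗ μ_A)(Ψ(1_A ⊗ 1_B) ⊗ a) for all a ∈ A. -/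
/-! Specialising `a = 1` and `b = 1` in weak unitality gives (i) and (ii); conversely, under (i)
and (ii) both sides of weak unitality equal `(mulLeft b ⊗ mulRight a) (Ψ (1 ⊗ 1))`. -/

open TensorProduct LinearMap

namespace LinearMap

theorem rTensor_lTensor_comm_apply {R M N P Q : Type*} [CommSemiring R]
    [AddCommMonoid M] [AddCommMonoid N] [AddCommMonoid P] [AddCommMonoid Q]
    [Module R M] [Module R N] [Module R P] [Module R Q]
    (f : M →ₗ[R] P) (g : N →ₗ[R] Q) (x : M ⊗[R] N) :
    f.rTensor Q (g.lTensor M x) = g.lTensor P (f.rTensor N x) := by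
  rw [← comp_apply, rTensor_comp_lTensor, ← lTensor_comp_rTensor, comp_apply]

end LinearMap

/-- For any `k`-linear map `Ψ : A ⊗ B → B ⊗ A`, the weak unitality condition
`(μ_B ⊗ id_A)(b ⊗ Ψ(a ⊗ 1)) = (id_B ⊗ μ_A)(Ψ(1 ⊗ b) ⊗ a)` holds iff
both `Ψ(1 ⊗ b) = (μ_B ⊗ id_A)(b ⊗ Ψ(1 ⊗ 1))` and
`Ψ(a ⊗ 1) = (id_B ⊗ μ_A)(Ψ(1 ⊗ 1) ⊗ a)` hold. -/
theorem weak_unitality_iff (k : Type*) [CommRing k]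
    (A B : Type*) [Ring A] [Algebra k A] [Ring B] [Algebra k B]
    (Ψ : A ⊗[k] B →ₗ[k] B ⊗[k] A) :
    (∀ (a : A) (b : B),
        rTensor A (mulLeft k b) (Ψ (a ⊗ₜ[k] (1 : B))) =
          lTensor B (mulRight k a) (Ψ ((1 : A) ⊗ₜ[k] b))) ↔
      ((∀ b : B,
          Ψ ((1 : A) ⊗ₜ[k] b) =
            rTensor A (mulLeft k b) (Ψ ((1 : A) ⊗ₜ[k] (1 : B)))) ∧
       (∀ a : A,
          Ψ (a ⊗ₜ[k] (1 : B)) =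
            lTensor B (mulRight k a) (Ψ ((1 : A) ⊗ₜ[k] (1 : B))))) := by
  constructor
  · intro h
    refine ⟨fun b => ?_, fun a => ?_⟩
    · simpa only [mulRight_one, lTensor_id_apply] using (h 1 b).symm
    · simpa only [mulLeft_one, rTensor_id_apply] using h a 1
  · rintro ⟨h_one_tmul, h_tmul_one⟩ a b
    rw [h_tmul_one a, h_one_tmul b, rTensor_lTensor_comm_apply]
end

section
/- Let R be a commutative k-algebra with a separable Frobenius structure given by ψ : R → k and (eᵢ, fᵢ), i = 1, …, n. Then for every R-module M and every R-module N, there is a (necessarily unique) k-linear map ι : M ⊗[R] N → M ⊗[k] N satisfying ι(m ⊗[R] n) = Σᵢ (eᵢ • m) ⊗[k] (fᵢ • n) for all m ∈ M, n ∈ N, and it is a section of the canonical projection π : M ⊗[k] N → M ⊗[R] N, m ⊗[k] n ↦ m ⊗[R] n, i.e. π ∘ ι = id. -/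
/-! By the two Frobenius relations the Casimir element `∑ᵢ eᵢ ⊗ fᵢ ∈ R ⊗[k] R` commutes
with `R`, i.e. `∑ᵢ r eᵢ ⊗ fᵢ = ∑ᵢ eᵢ ⊗ fᵢ r`. Hence `(m, x) ↦ ∑ᵢ eᵢ m ⊗ fᵢ x` is `R`-balanced and
descends to `M ⊗[R] N`; projecting back gives `m ⊗ (∑ᵢ eᵢ fᵢ) x = m ⊗ x`. Uniqueness holds because
pure tensors span `M ⊗[R] N`. -/

open TensorProduct LinearMap

noncomputable section

variable (k : Type*) [CommRing k] (R : Type*) [CommRing R] [Algebra k R]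
variable (M N : Type*) [AddCommGroup M] [Module k M] [Module R M] [IsScalarTower k R M]
  [AddCommGroup N] [Module k N] [Module R N] [IsScalarTower k R N]

/-- The canonical projection `π : M ⊗[k] N → M ⊗[R] N`, `m ⊗[k] n ↦ m ⊗[R] n`. -/
def canProj : M ⊗[k] N →ₗ[k] M ⊗[R] N :=
  TensorProduct.lift
    (LinearMap.mk₂ k (fun m n => m ⊗ₜ[R] n)
      (fun m₁ m₂ n => TensorProduct.add_tmul m₁ m₂ n)
      (fun c m n => (TensorProduct.smul_tmul' c m n).symm)
      (fun m n₁ n₂ => TensorProduct.tmul_add m n₁ n₂)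
      (fun c m n => by
        show m ⊗ₜ[R] (c • n) = c • (m ⊗ₜ[R] n)
        rw [← IsScalarTower.algebraMap_smul R c n, ← TensorProduct.smul_tmul,
          IsScalarTower.algebraMap_smul, TensorProduct.smul_tmul']))

theorem sum_mul_tmul_eq_sum_tmul_mul {k R ι : Type*} [CommSemiring k] [Semiring R] [Algebra k R]
    [Fintype ι] (ψ : R →ₗ[k] k) (e f : ι → R)
    (hfrob₁ : ∀ r : R, ∑ i, ψ (r * e i) • f i = r)
    (hfrob₂ : ∀ r : R, ∑ i, ψ (f i * r) • e i = r) (r : R) :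
    ∑ i, (r * e i) ⊗ₜ[k] f i = ∑ i, e i ⊗ₜ[k] (f i * r) :=
  calc ∑ i, (r * e i) ⊗ₜ[k] f i
      = ∑ i, (∑ j, ψ (f j * (r * e i)) • e j) ⊗ₜ[k] f i := by simp_rw [hfrob₂]
    _ = ∑ j, e j ⊗ₜ[k] ∑ i, ψ (f j * r * e i) • f i := by
        simp_rw [sum_tmul, tmul_sum, ← smul_tmul, mul_assoc]
        exact Finset.sum_comm
    _ = ∑ j, e j ⊗ₜ[k] (f j * r) := by simp_rw [hfrob₁]

theorem TensorProduct.linearMap_ext_tmul {k R M N P : Type*} [Semiring k] [CommSemiring R]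
    [AddCommMonoid M] [Module R M] [Module k M] [SMulCommClass R k M]
    [AddCommMonoid N] [Module R N] [AddCommMonoid P] [Module k P] {g h : M ⊗[R] N →ₗ[k] P}
    (H : ∀ m x, g (m ⊗ₜ x) = h (m ⊗ₜ x)) : g = h :=
  LinearMap.ext fun z => z.induction_on (by simp only [map_zero]) H
    fun _ _ hz hw => by simp only [map_add, hz, hw]

section CasimirMap

variable {k R M N ι : Type*} [CommSemiring k] [CommSemiring R] [Algebra k R]
  [AddCommMonoid M] [Module k M] [Module R M] [IsScalarTower k R M]
  [AddCommMonoid N] [Module k N] [Module R N] [IsScalarTower k R N] [Fintype ι]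

def casimirMap (e f : ι → R)
    (hcomm : ∀ r : R, ∑ i, (r * e i) ⊗ₜ[k] f i = ∑ i, e i ⊗ₜ[k] (f i * r)) :
    M ⊗[R] N →ₗ[k] M ⊗[k] N :=
  (TensorProduct.lift <| LinearMap.mk₂ R (fun m x => ∑ i, (e i • m) ⊗ₜ[k] (f i • x))
    (fun m m' x => by simp only [smul_add, add_tmul, Finset.sum_add_distrib])
    (fun r m x => by simp only [Finset.smul_sum, smul_tmul', smul_comm r])
    (fun m x x' => by simp only [smul_add, tmul_add, Finset.sum_add_distrib])
    (fun r m x => by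
      -- `R` acts on `M ⊗[k] N` through `M`, so linearity in `x` is exactly `hcomm r`.
      have h := congrArg (TensorProduct.map ((LinearMap.toSpanSingleton R M m).restrictScalars k)
        ((LinearMap.toSpanSingleton R N x).restrictScalars k)) (hcomm r)
      simpa only [map_sum, map_tmul, LinearMap.restrictScalars_apply,
        LinearMap.toSpanSingleton_apply, mul_smul, Finset.smul_sum, smul_tmul'] using h.symm)
  ).restrictScalars k

theorem casimirMap_tmul (e f : ι → R)
    (hcomm : ∀ r : R, ∑ i, (r * e i) ⊗ₜ[k] f i = ∑ i, e i ⊗ₜ[k] (f i * r)) (m : M) (x : N) :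
    casimirMap e f hcomm (m ⊗ₜ[R] x) = ∑ i, (e i • m) ⊗ₜ[k] (f i • x) :=
  rfl

end CasimirMap

section CanProj

variable {k R M N}

theorem canProj_tmul (m : M) (x : N) : canProj k R M N (m ⊗ₜ[k] x) = m ⊗ₜ[R] x :=
  rfl

theorem canProj_comp_casimirMap {ι : Type*} [Fintype ι] (e f : ι → R)
    (hcomm : ∀ r : R, ∑ i, (r * e i) ⊗ₜ[k] f i = ∑ i, e i ⊗ₜ[k] (f i * r))
    (hsep : ∑ i, e i * f i = 1) :
    canProj k R M N ∘ₗ casimirMap e f hcomm = LinearMap.id :=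
  linearMap_ext_tmul fun m x => calc
    canProj k R M N (casimirMap e f hcomm (m ⊗ₜ x)) = ∑ i, (e i • m) ⊗ₜ[R] (f i • x) := by
      simp only [casimirMap_tmul, map_sum, canProj_tmul]
    _ = m ⊗ₜ[R] ((∑ i, e i * f i) • x) := by
      simp only [smul_tmul, smul_smul, Finset.sum_smul, tmul_sum]
    _ = m ⊗ₜ[R] x := by rw [hsep, one_smul]

end CanProj

/-- If the commutative `k`-algebra `R` has a separable Frobenius structure
`(ψ, (eᵢ, fᵢ))`, then for all `R`-modules `M`, `N` there is a unique `k`-linear map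
`ι : M ⊗[R] N → M ⊗[k] N` with `ι(m ⊗ n) = Σᵢ (eᵢ • m) ⊗ (fᵢ • n)`, and it is a
section of the canonical projection `π : M ⊗[k] N → M ⊗[R] N`. -/
theorem frobenius_section_exists_unique
    (n : ℕ) (e f : Fin n → R) (ψ : R →ₗ[k] k)
    (hfrob₁ : ∀ r : R, ∑ i, ψ (r * e i) • f i = r)
    (hfrob₂ : ∀ r : R, ∑ i, ψ (f i * r) • e i = r)
    (hsep : ∑ i, e i * f i = 1) :
    ∃ ι : M ⊗[R] N →ₗ[k] M ⊗[k] N,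
      (∀ (m : M) (x : N), ι (m ⊗ₜ[R] x) = ∑ i, (e i • m) ⊗ₜ[k] (f i • x)) ∧
      canProj k R M N ∘ₗ ι = LinearMap.id ∧
      ∀ ι' : M ⊗[R] N →ₗ[k] M ⊗[k] N,
        (∀ (m : M) (x : N), ι' (m ⊗ₜ[R] x) = ∑ i, (e i • m) ⊗ₜ[k] (f i • x)) → ι' = ι := by
  have hcomm := sum_mul_tmul_eq_sum_tmul_mul ψ e f hfrob₁ hfrob₂
  refine ⟨casimirMap e f hcomm, casimirMap_tmul e f hcomm, canProj_comp_casimirMap e f hcomm hsep,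
    fun ι' hι' => linearMap_ext_tmul fun m x => ?_⟩
  rw [hι', casimirMap_tmul]
end
end

section
/- Let k be a field with characteristic different from 2, let T be the k-subalgebra of 2×2 matrices over k consisting of the upper triangular matrices (matrices M with M₁₀ = 0), and let G := k[ℤ₂] be the group algebra of the cyclic group of order 2, with group-like generator g satisfying g² = 1. Set a := [[1,1],[0,-1]] ∈ T and b := [[-1,0],[0,1]] ∈ T. Then: (i) there are unique unital k-algebra homomorphisms α, β : G → T with α(g) = a and β(g) = b; (ii) defining π : G ⊗[k] G → T by π(x ⊗ y) := β(x)·α(y), there exists a k-linear map ι : T → G ⊗[k] G with π ∘ ι = id_T and ι(β(x)·t·α(y)) = (L_x ⊗ R_y)(ι(t)) for all x, y ∈ G and t ∈ T, where L_x is left multiplication by x and R_y is right multiplication by y on G. Hence T admits a bilinear factorization in terms of two copies of k[ℤ₂]. -/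
set_option synthInstance.maxHeartbeats 1000000
set_option maxHeartbeats 1600000

open TensorProduct LinearMap

noncomputable section

/-- The algebra of `2 × 2` upper triangular matrices over `k`. -/
def UT (k : Type*) [CommRing k] : Subalgebra k (Matrix (Fin 2) (Fin 2) k) where
  carrier := {M | M 1 0 = 0}
  mul_mem' := by
    intro M N hM hN
    simp only [Set.mem_setOf_eq] at *
    rw [Matrix.mul_apply, Fin.sum_univ_two, hM, hN]
    ring
  one_mem' := by simp [Set.mem_setOf_eq, Matrix.one_apply]
  add_mem' := by
    intro M N hM hN
    simp only [Set.mem_setOf_eq, Matrix.add_apply] at *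
    rw [hM, hN, add_zero]
  zero_mem' := by simp [Set.mem_setOf_eq]
  algebraMap_mem' := by
    intro c
    simp [Set.mem_setOf_eq, Matrix.algebraMap_matrix_apply]

/-- The element `a = [[1,1],[0,-1]]` of `T`. -/
def matA (k : Type*) [CommRing k] : UT k :=
  ⟨!![1, 1; 0, -1], show (!![1, 1; 0, -1] : Matrix (Fin 2) (Fin 2) k) 1 0 = 0 by simp⟩

/-- The element `b = [[-1,0],[0,1]]` of `T`. -/
def matB (k : Type*) [CommRing k] : UT k :=
  ⟨!![-1, 0; 0, 1], show (!![-1, 0; 0, 1] : Matrix (Fin 2) (Fin 2) k) 1 0 = 0 by simp⟩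

/-- The group-like generator `g` of the group algebra `k[ℤ₂]`. -/
def genG (k : Type*) [CommRing k] : MonoidAlgebra k (Multiplicative (ZMod 2)) :=
  MonoidAlgebra.of k (Multiplicative (ZMod 2)) (Multiplicative.ofAdd 1)

/-!
Since `2` is invertible, `k[ℤ₂]` is spanned by the orthogonal idempotents `e₋ = (1 - g) / 2` and
`e₊ = (1 + g) / 2`. Their images are `β e₋ = E₀₀`, `β e₊ = E₁₁` and `α e₋ = [[0, -1/2], [0, 1]]`,
so `E₀₀ = β(e₋) α(1)`, `E₀₁ = -2 β(e₋) α(e₋)` and `E₁₁ = β(e₊) α(e₋)`; the section `ι` sends the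
matrix units to the corresponding tensors. As `g` generates `k[ℤ₂]`, the bimodule property of `ι`
only has to be checked for left multiplication by `b = β g` and right multiplication by `a = α g`.
-/

section Intertwining

variable {k A R N : Type*} [CommSemiring k] [Semiring A] [Algebra k A] [Semiring R] [Algebra k R]
  [AddCommMonoid N] [Module k N]

theorem map_mulLeft_of_adjoin_eq_top (β : A →ₐ[k] R) (ι : R →ₗ[k] A ⊗[k] N) {s : Set A}
    (hs : Algebra.adjoin k s = ⊤)
    (h : ∀ u ∈ s, ∀ t, ι (β u * t) = map (mulLeft k u) LinearMap.id (ι t)) (x : A) (t : R) :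
    ι (β x * t) = map (mulLeft k x) LinearMap.id (ι t) := by
  have hx : x ∈ Algebra.adjoin k s := hs ▸ Algebra.mem_top
  induction hx using Algebra.adjoin_induction generalizing t with
  | mem u hu => exact h u hu t
  | algebraMap r =>
    have hr : mulLeft k (algebraMap k A r) = r • LinearMap.id :=
      ext fun a ↦ (Algebra.smul_def r a).symm
    rw [AlgHom.commutes, ← Algebra.smul_def, map_smul, hr, map_smul_left, map_id,
      LinearMap.smul_apply, id_apply]
  | add x y _ _ hx hy =>
    have hxy : mulLeft k (x + y) = mulLeft k x + mulLeft k y := ext fun a ↦ add_mul x y a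
    rw [map_add, add_mul, map_add, hx, hy, hxy, map_add_left, LinearMap.add_apply]
  | mul x y _ _ hx hy =>
    rw [map_mul β, mul_assoc, hx, hy, mulLeft_mul, ← comp_apply, ← map_comp, id_comp]

theorem map_mulRight_of_adjoin_eq_top (α : A →ₐ[k] R) (ι : R →ₗ[k] N ⊗[k] A) {s : Set A}
    (hs : Algebra.adjoin k s = ⊤)
    (h : ∀ u ∈ s, ∀ t, ι (t * α u) = map LinearMap.id (mulRight k u) (ι t)) (y : A) (t : R) :
    ι (t * α y) = map LinearMap.id (mulRight k y) (ι t) := by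
  have hy : y ∈ Algebra.adjoin k s := hs ▸ Algebra.mem_top
  induction hy using Algebra.adjoin_induction generalizing t with
  | mem u hu => exact h u hu t
  | algebraMap r =>
    have hr : mulRight k (algebraMap k A r) = r • LinearMap.id :=
      ext fun a ↦ (Algebra.commutes r a).symm.trans (Algebra.smul_def r a).symm
    rw [AlgHom.commutes, ← Algebra.commutes, ← Algebra.smul_def, map_smul, hr, map_smul_right,
      map_id, LinearMap.smul_apply, id_apply]
  | add x y _ _ hx hy =>
    have hxy : mulRight k (x + y) = mulRight k x + mulRight k y := ext fun a ↦ mul_add a x y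
    rw [map_add, mul_add, map_add, hx, hy, hxy, map_add_right, LinearMap.add_apply]
  | mul x y _ _ hx hy =>
    rw [map_mul α, ← mul_assoc, hy, hx, mulRight_mul, ← comp_apply, ← map_comp, id_comp]

end Intertwining

section GroupAlgebraZ2

variable (k : Type*) [CommRing k]

local notation "G" => MonoidAlgebra k (Multiplicative (ZMod 2))

theorem genG_mul_self : genG k * genG k = 1 := by
  rw [genG, ← map_mul, ← ofAdd_add, show (1 + 1 : ZMod 2) = 0 from rfl, ofAdd_zero, map_one]

theorem adjoin_genG_eq_top : Algebra.adjoin k {genG k} = ⊤ := by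
  refine Algebra.eq_top_iff.2 fun x ↦ ?_
  induction x using MonoidAlgebra.induction_on with
  | of z =>
    obtain ⟨z, rfl⟩ := Multiplicative.ofAdd.surjective z
    fin_cases z
    · exact (map_one (MonoidAlgebra.of k (Multiplicative (ZMod 2)))).symm ▸ Subalgebra.one_mem _
    · exact Algebra.subset_adjoin rfl
  | add x y hx hy => exact add_mem hx hy
  | smul r x hx => exact Subalgebra.smul_mem _ hx r

theorem algHom_ext_genG {R : Type*} [Semiring R] [Algebra k R] {φ ψ : G →ₐ[k] R}
    (h : φ (genG k) = ψ (genG k)) : φ = ψ :=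
  AlgHom.ext_of_adjoin_eq_top (adjoin_genG_eq_top k) (Set.eqOn_singleton.2 h)

variable {k} {R : Type*} [Semiring R] [Algebra k R]

def involutionHom (u : R) (hu : u * u = 1) : Multiplicative (ZMod 2) →* R where
  toFun z := u ^ z.toAdd.val
  map_one' := pow_zero u
  map_mul' x y := by
    rw [toAdd_mul, ZMod.val_add, ← pow_eq_pow_mod _ (by rw [sq, hu]), pow_add]

def liftInvolution (u : R) (hu : u * u = 1) : G →ₐ[k] R :=
  MonoidAlgebra.lift k R _ (involutionHom u hu)

theorem liftInvolution_genG (u : R) (hu : u * u = 1) : liftInvolution u hu (genG k) = u := by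
  rw [liftInvolution, genG, MonoidAlgebra.lift_of]
  exact pow_one u

theorem existsUnique_algHom_genG (u : R) (hu : u * u = 1) : ∃! φ : G →ₐ[k] R, φ (genG k) = u :=
  ⟨liftInvolution u hu, liftInvolution_genG u hu, fun _ hφ ↦
    algHom_ext_genG k (hφ.trans (liftInvolution_genG u hu).symm)⟩

end GroupAlgebraZ2

theorem matA_mul_self (k : Type*) [CommRing k] : matA k * matA k = 1 := by
  ext i j
  fin_cases i <;> fin_cases j <;> simp [matA, Matrix.mul_apply]

theorem matB_mul_self (k : Type*) [CommRing k] : matB k * matB k = 1 := by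
  ext i j
  fin_cases i <;> fin_cases j <;> simp [matB, Matrix.mul_apply]

namespace UT

variable {k : Type*} [Field k]

local notation "G" => MonoidAlgebra k (Multiplicative (ZMod 2))

def idemNeg : G := (2⁻¹ : k) • (1 - genG k)

def idemPos : G := (2⁻¹ : k) • (1 + genG k)

theorem genG_mul_idemNeg : genG k * idemNeg = -idemNeg := by
  rw [idemNeg, mul_smul_comm, mul_sub, mul_one, genG_mul_self, ← smul_neg, neg_sub]

theorem genG_mul_idemPos : genG k * idemPos = idemPos := by
  rw [idemPos, mul_smul_comm, mul_add, mul_one, genG_mul_self, add_comm]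

theorem idemNeg_mul_genG : idemNeg * genG k = -idemNeg := by
  rw [mul_comm, genG_mul_idemNeg]

theorem genG_eq_one_sub_two_smul_idemNeg (hchar : (2 : k) ≠ 0) :
    genG k = 1 - (2 : k) • idemNeg := by
  rw [idemNeg, smul_smul, mul_inv_cancel₀ hchar, one_smul, sub_sub_cancel]

def entry (i j : Fin 2) : UT k →ₗ[k] k :=
  Matrix.entryLinearMap k k i j ∘ₗ (UT k).val.toLinearMap

def iota : UT k →ₗ[k] G ⊗[k] G :=
  (entry 0 0).smulRight (idemNeg ⊗ₜ 1) + (entry 0 1).smulRight ((-2 : k) • idemNeg ⊗ₜ idemNeg) +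
    (entry 1 1).smulRight (idemPos ⊗ₜ idemNeg)

theorem iota_apply (t : UT k) :
    iota t = t.1 0 0 • idemNeg ⊗ₜ 1 + t.1 0 1 • ((-2 : k) • idemNeg ⊗ₜ idemNeg) +
      t.1 1 1 • idemPos ⊗ₜ idemNeg :=
  rfl

theorem iota_matB_mul (t : UT k) :
    iota (matB k * t) = map (mulLeft k (genG k)) LinearMap.id (iota t) := by
  obtain ⟨h00, h01, h11⟩ : (matB k * t).1 0 0 = -t.1 0 0 ∧ (matB k * t).1 0 1 = -t.1 0 1 ∧
      (matB k * t).1 1 1 = t.1 1 1 := by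
    simp [matB, Matrix.mul_apply]
  rw [iota_apply, iota_apply, h00, h01, h11]
  simp only [map_add, map_smul, map_tmul, mulLeft_apply, id_apply, genG_mul_idemNeg,
    genG_mul_idemPos, neg_tmul]
  module

theorem iota_mul_matA (hchar : (2 : k) ≠ 0) (t : UT k) :
    iota (t * matA k) = map LinearMap.id (mulRight k (genG k)) (iota t) := by
  have h10 : t.1 1 0 = 0 := t.2
  obtain ⟨h00, h01, h11⟩ : (t * matA k).1 0 0 = t.1 0 0 ∧
      (t * matA k).1 0 1 = t.1 0 0 - t.1 0 1 ∧ (t * matA k).1 1 1 = -t.1 1 1 := by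
    simp [matA, Matrix.mul_apply, h10, sub_eq_add_neg]
  rw [iota_apply, iota_apply, h00, h01, h11]
  simp only [map_add, map_smul, map_tmul, mulRight_apply, id_apply, one_mul, idemNeg_mul_genG,
    tmul_neg]
  rw [genG_eq_one_sub_two_smul_idemNeg hchar, tmul_sub, tmul_smul]
  module

theorem mul'_comp_map_comp_iota (hchar : (2 : k) ≠ 0) (α β : G →ₐ[k] UT k)
    (hα : α (genG k) = matA k) (hβ : β (genG k) = matB k) :
    (mul' k (UT k) ∘ₗ map β.toLinearMap α.toLinearMap) ∘ₗ iota = LinearMap.id := by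
  refine LinearMap.ext fun t ↦ Subtype.ext ?_
  have h10 : t.1 1 0 = 0 := t.2
  simp only [comp_apply, iota_apply, map_add, map_smul, map_tmul, mul'_apply,
    AlgHom.toLinearMap_apply, map_one, mul_one, idemNeg, idemPos, map_sub, hα, hβ]
  ext i j
  fin_cases i <;> fin_cases j <;> simp [matA, matB, Matrix.mul_apply, h10] <;> field_simp <;> ring

end UT

/-- Over a field `k` of characteristic `≠ 2`, the three dimensional algebra `T` of
`2 × 2` upper triangular matrices admits a bilinear factorization in terms of two
copies of `k[ℤ₂]`: there are unique unital algebra homomorphisms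
`α, β : k[ℤ₂] → T` with `α(g) = a`, `β(g) = b`, and the `B`-`A` bimodule map
`π : k[ℤ₂] ⊗ k[ℤ₂] → T`, `x ⊗ y ↦ β(x)·α(y)` has a `B`-`A` bilinear section `ι`. -/
theorem upper_triangular_bilinear_factorization
    (k : Type*) [Field k] (hchar : (2 : k) ≠ 0) :
    (∃! α : MonoidAlgebra k (Multiplicative (ZMod 2)) →ₐ[k] UT k,
      α (genG k) = matA k) ∧
    (∃! β : MonoidAlgebra k (Multiplicative (ZMod 2)) →ₐ[k] UT k,
      β (genG k) = matB k) ∧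
    (∀ (α β : MonoidAlgebra k (Multiplicative (ZMod 2)) →ₐ[k] UT k),
      α (genG k) = matA k → β (genG k) = matB k →
      ∃ ι : UT k →ₗ[k]
          MonoidAlgebra k (Multiplicative (ZMod 2)) ⊗[k]
            MonoidAlgebra k (Multiplicative (ZMod 2)),
        (mul' k (UT k) ∘ₗ TensorProduct.map β.toLinearMap α.toLinearMap) ∘ₗ ι =
          LinearMap.id ∧
        ∀ (x y : MonoidAlgebra k (Multiplicative (ZMod 2))) (t : UT k),
          ι (β x * t * α y) =
            TensorProduct.map (mulLeft k x) (mulRight k y) (ι t)) := by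
  refine ⟨existsUnique_algHom_genG _ (matA_mul_self k),
    existsUnique_algHom_genG _ (matB_mul_self k), fun α β hα hβ ↦
      ⟨UT.iota, UT.mul'_comp_map_comp_iota hchar α β hα hβ, fun x y t ↦ ?_⟩⟩
  have hleft := map_mulLeft_of_adjoin_eq_top β UT.iota (adjoin_genG_eq_top k) <| by
    rintro u rfl
    simpa only [hβ] using UT.iota_matB_mul
  have hright := map_mulRight_of_adjoin_eq_top α UT.iota (adjoin_genG_eq_top k) <| by
    rintro u rfl
    simpa only [hα] using UT.iota_mul_matA hchar
  rw [mul_assoc, hleft, hright, ← comp_apply, ← map_comp, comp_id, id_comp]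
end
end
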